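/- arXiv:0710.1234 — 5 statements merged into one kernel-verified Lean document; each statement's English description precedes it below -/
import Mathlib

section
/- There do not exist strings x and y (over any alphabet) such that the Hamming distance between xy and yx equals 1. -/
/-!
`y ++ x` is a rearrangement of `x ++ y`. Two words that are rearrangements of each other cannot
differ in exactly one position: agreeing everywhere else, the letter at that position would occur
a different number of times in the two words.
-/

/-- Hamming distance between two lists (of equal length): number of
positions where they differ. -/
def hdist {α : Type*} [DecidableEq α] (u v : List α) : ℕ :=
  ((u.zip v).filter (fun p => decide (p.1 ≠ p.2))).length

section

variable {α : Type*}

lemma cons_perm_cons_iff_eq {a b : α} {u : List α} : (a :: u).Perm (b :: u) ↔ a = b :=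
  (List.perm_append_right_iff (l₁ := [a]) (l₂ := [b]) u).trans List.singleton_perm_singleton

variable [DecidableEq α]

@[simp]
lemma hdist_nil_left (v : List α) : hdist [] v = 0 := rfl

@[simp]
lemma hdist_nil_right (u : List α) : hdist u [] = 0 := by
  simp [hdist]

lemma hdist_cons_cons (a b : α) (u v : List α) :
    hdist (a :: u) (b :: v) = hdist u v + if a = b then 0 else 1 := by
  by_cases hab : a = b <;> simp [hdist, hab]

lemma eq_of_hdist_eq_zero :
    ∀ {u v : List α}, u.length = v.length → hdist u v = 0 → u = v
  | [], [], _, _ => rfl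
  | a :: u, b :: v, hlen, h => by
    rw [hdist_cons_cons] at h
    have hab : a = b := by by_contra hab; simp [hab] at h
    subst hab
    simp only [ite_true, add_zero] at h
    rw [eq_of_hdist_eq_zero (Nat.succ.inj hlen) h]

lemma hdist_ne_one_of_perm : ∀ {u v : List α}, u.Perm v → hdist u v ≠ 1
  | [], _, _ => by simp
  | _ :: _, [], _ => by simp
  | a :: u, b :: v, hperm => by
    rw [hdist_cons_cons]
    by_cases hab : a = b
    · subst hab
      simpa using hdist_ne_one_of_perm hperm.cons_inv
    · intro h
      have huv : u = v :=
        eq_of_hdist_eq_zero (Nat.succ.inj hperm.length_eq) (by simpa [hab] using h)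
      subst huv
      exact hab (cons_perm_cons_iff_eq.mp hperm)

end

theorem no_hamming_one {α : Type*} [DecidableEq α] :
    ¬ ∃ x y : List α, hdist (x ++ y) (y ++ x) = 1 := by
  rintro ⟨x, y, h⟩
  exact hdist_ne_one_of_perm List.perm_append_comm h
end

section
/- Let Σ be an alphabet with at least 3 letters and let m, k be integers with 1 ≤ m and 0 ≤ k ≤ 2m. Then there exist strings x, y over Σ with |x| = |y| = m and h(xy, yx) = k if and only if k is even. -/
section Hamming

variable {α : Type*} [DecidableEq α]

lemma hdist_append {x y : List α} (u v : List α) (h : x.length = y.length) :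
    hdist (x ++ u) (y ++ v) = hdist x y + hdist u v := by
  unfold hdist
  rw [List.zip_append h, List.filter_append, List.length_append]

lemma hdist_comm (x y : List α) : hdist x y = hdist y x := by
  unfold hdist
  rw [← List.zip_swap y x, List.filter_map, List.length_map]
  congr 1
  exact List.filter_congr fun p _ => by simp [eq_comm]

lemma hdist_self (x : List α) : hdist x x = 0 := by
  simp [hdist, List.filter_eq_nil_iff, List.mem_iff_get]

lemma hdist_replicate_of_ne {a b : α} (hab : a ≠ b) (n : ℕ) :
    hdist (List.replicate n a) (List.replicate n b) = n := by
  simp [hdist, List.zip_replicate', hab]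

lemma hdist_append_swap {x y : List α} (h : x.length = y.length) :
    hdist (x ++ y) (y ++ x) = 2 * hdist x y := by
  rw [hdist_append _ _ h, hdist_comm y x, two_mul]

lemma hdist_replicate_replicate_append {a b : α} (hab : a ≠ b) {j m : ℕ} (hjm : j ≤ m) :
    hdist (List.replicate m a) (List.replicate j b ++ List.replicate (m - j) a) = j := by
  rw [← Nat.add_sub_cancel' hjm, List.replicate_add, Nat.add_sub_cancel_left,
    hdist_append _ _ (by simp), hdist_replicate_of_ne hab, hdist_self, add_zero]

end Hamming

theorem hamming_realizable_eq_general {α : Type*} [DecidableEq α]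
    (hcard : ∃ a b c : α, a ≠ b ∧ a ≠ c ∧ b ≠ c)
    (m k : ℕ) (hk : k ≤ 2 * m) :
    (∃ x y : List α, x.length = m ∧ y.length = m ∧ hdist (x ++ y) (y ++ x) = k) ↔
      Even k := by
  constructor
  · rintro ⟨x, y, hx, hy, rfl⟩
    rw [hdist_append_swap (hx.trans hy.symm)]
    exact even_two_mul _
  · rintro ⟨j, rfl⟩
    obtain ⟨a, b, -, hab, -, -⟩ := hcard
    have hjm : j ≤ m := by omega
    refine ⟨List.replicate m a, List.replicate j b ++ List.replicate (m - j) a,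
      List.length_replicate, by simp [hjm], ?_⟩
    rw [hdist_append_swap (by simp [hjm]), hdist_replicate_replicate_append hab hjm, two_mul]

theorem hamming_realizable_eq {α : Type*} [DecidableEq α]
    (hcard : ∃ a b c : α, a ≠ b ∧ a ≠ c ∧ b ≠ c)
    (m k : ℕ) (hm : 1 ≤ m) (hk : k ≤ 2 * m) :
    (∃ x y : List α, x.length = m ∧ y.length = m ∧ hdist (x ++ y) (y ++ x) = k) ↔
      Even k :=
  hamming_realizable_eq_general hcard m k hk
end

section
/- Let x, y be binary strings with |x| = m, |y| = n, m, n ≥ 1. If (m+n)/gcd(m,n) is odd, then h(xy, yx) ≤ m + n − gcd(m,n). -/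
/-!
Write `z = xy`, of length `N = m + n`. Then `yx` is the rotation of `z` by `m`, so `xy` and `yx`
differ exactly at the `i ∈ ℤ/N` with `z i ≠ z (i + m)`. Translation by `m` permutes each coset of
the subgroup generated by `m`; these cosets have the odd size `N / gcd(m, n)`, and there are
`gcd(m, n)` of them. On each coset the number of mismatches is even, because modulo 2 it is
`∑ (z i + z (i + m)) = 2 ∑ z i`. Hence each coset contributes at most its size minus one.
-/

open Finset

theorem even_card_filter_ne_of_bijOn {α : Type*} (f : α → Fin 2) {σ : α → α} {s : Finset α}
    (hσ : Set.BijOn σ s s) : Even #{i ∈ s | f i ≠ f (σ i)} := by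
  have hne (a b : Fin 2) : (if a ≠ b then 1 else 0 : ZMod 2) = a.val + b.val := by
    revert a b; decide
  have hsum : ∑ i ∈ s, ((f (σ i)).val : ZMod 2) = ∑ i ∈ s, ((f i).val : ZMod 2) :=
    sum_nbij σ (fun _ hi => hσ.mapsTo hi) hσ.injOn hσ.surjOn (fun _ _ => rfl)
  rw [← ZMod.natCast_eq_zero_iff_even, card_filter]
  push_cast
  rw [sum_congr rfl fun i _ => hne (f i) (f (σ i)), sum_add_distrib, hsum]
  generalize ∑ i ∈ s, ((f i).val : ZMod 2) = t
  revert t; decide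

theorem card_filter_ne_lt_of_bijOn {α : Type*} (f : α → Fin 2) {σ : α → α} {s : Finset α}
    (hσ : Set.BijOn σ s s) (hs : Odd #s) : #{i ∈ s | f i ≠ f (σ i)} < #s := by
  have heven := even_card_filter_ne_of_bijOn f hσ
  refine (card_filter_le _ _).lt_of_ne fun h => ?_
  exact Nat.not_even_iff_odd.2 hs (h ▸ heven)

namespace QuotientAddGroup
variable {G : Type*} [AddGroup G]

theorem bijOn_add_right_preimage_mk_zmultiples (c : G) (q : G ⧸ AddSubgroup.zmultiples c) :
    Set.BijOn (· + c) (mk ⁻¹' {q}) (mk ⁻¹' {q}) :=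
  (Equiv.addRight c).bijOn fun a => by
    simp [mk_add_of_mem a (AddSubgroup.mem_zmultiples c)]

theorem card_preimage_mk_zmultiples (c : G) (q : G ⧸ AddSubgroup.zmultiples c) :
    Nat.card (mk ⁻¹' {q} : Set G) = addOrderOf c := by
  rw [Nat.card_congr (preimageMkEquivAddSubgroupProdSet _ _), Nat.card_prod, Nat.card_zmultiples,
    Nat.card_unique, mul_one]

end QuotientAddGroup

open QuotientAddGroup in
theorem hammingDist_add_right_add_index_le {G : Type*} [AddGroup G] [Fintype G] (f : G → Fin 2)
    {c : G} (hc : Odd (addOrderOf c)) :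
    hammingDist f (fun i => f (i + c)) + (AddSubgroup.zmultiples c).index ≤ Fintype.card G := by
  classical
  set H := AddSubgroup.zmultiples c
  let F (q : G ⧸ H) : Finset G := {i | (i : G ⧸ H) = q}
  have hF (q : G ⧸ H) : (F q : Set G) = mk ⁻¹' {q} := by ext; simp [F]
  have hmismatch (q : G ⧸ H) : #{i ∈ F q | f i ≠ f (i + c)} < #(F q) := by
    have hcard : #(F q) = addOrderOf c := by
      rw [← card_preimage_mk_zmultiples c q, ← hF, Nat.card_coe_set_eq, Set.ncard_coe_finset]
    refine card_filter_ne_lt_of_bijOn f ?_ (hcard ▸ hc)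
    rw [hF]
    exact bijOn_add_right_preimage_mk_zmultiples c q
  calc hammingDist f (fun i => f (i + c)) + H.index
      = ∑ q, (#{i ∈ F q | f i ≠ f (i + c)} + 1) := by
        rw [hammingDist, card_eq_sum_card_fiberwise (f := ((↑) : G → G ⧸ H)) (t := univ)
          (fun _ _ => mem_univ _), AddSubgroup.index_eq_card, Nat.card_eq_fintype_card,
          sum_add_distrib, ← card_univ, card_eq_sum_ones]
        simp only [F, filter_filter, and_comm]
    _ ≤ ∑ q, #(F q) := sum_le_sum fun q _ => hmismatch q
    _ = Fintype.card G := (card_eq_sum_card_fiberwise fun _ _ => mem_univ _).symm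

theorem hdist_eq_card_filter_range {α : Type*} [DecidableEq α] {u v : List α}
    (h : u.length = v.length) : hdist u v = #{i ∈ range u.length | u[i]? ≠ v[i]?} := by
  induction u generalizing v with
  | nil => simp [hdist]
  | cons a u ih =>
    obtain _ | ⟨b, v⟩ := v
    · simp at h
    simp only [List.length_cons, add_left_inj] at h
    rw [card_filter, List.length_cons, sum_range_succ', ← card_filter]
    simp only [hdist, List.zip_cons_cons, List.filter_cons, List.getElem?_cons_succ,
      List.getElem?_cons_zero, ne_eq, Option.some.injEq] at ih ⊢
    rw [← ih h]
    by_cases hab : a = b <;> simp [hab]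

theorem exists_hdist_rotate_eq_hammingDist {α : Type*} [DecidableEq α] (l : List α) {N : ℕ}
    [NeZero N] (hl : l.length = N) (k : ℕ) :
    ∃ f : ZMod N → α, hdist l (l.rotate k) = hammingDist f (fun i => f (i + k)) := by
  let f (i : ZMod N) : α := l[i.val]'(hl ▸ i.val_lt)
  have hf (i : ℕ) (hi : i < N) : l[i]? = some (f i) := by
    simp [f, ZMod.val_cast_of_lt hi, hl, hi]
  have hf_rotate (i : ℕ) (hi : i < N) : (l.rotate k)[i]? = some (f (i + k)) := by
    rw [List.getElem?_rotate (hl ▸ hi), hl, hf _ (Nat.mod_lt _ (NeZero.pos N))]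
    simp
  have hmismatch (i : ℕ) (hi : i < N) : l[i]? ≠ (l.rotate k)[i]? ↔ f i ≠ f (i + k) := by
    rw [hf i hi, hf_rotate i hi, ne_eq, Option.some_inj]
  refine ⟨f, ?_⟩
  rw [hdist_eq_card_filter_range (l.length_rotate k).symm, hammingDist, hl]
  refine card_nbij' (fun i => (i : ZMod N)) ZMod.val ?_ ?_ ?_ ?_
  · intro i hi
    simp only [mem_coe, mem_filter, mem_range, mem_univ, true_and] at hi ⊢
    exact (hmismatch i hi.1).1 hi.2
  · intro j hj
    simp only [mem_coe, mem_filter, mem_range, mem_univ, true_and] at hj ⊢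
    refine ⟨j.val_lt, (hmismatch j.val j.val_lt).2 ?_⟩
    rwa [ZMod.natCast_zmod_val]
  · intro i hi
    exact ZMod.val_cast_of_lt (mem_range.1 (mem_filter.1 hi).1)
  · intro j _
    exact ZMod.natCast_zmod_val j

theorem ZMod.index_zmultiples_natCast (a : ℕ) {n : ℕ} [NeZero n] :
    (AddSubgroup.zmultiples (a : ZMod n)).index = n.gcd a := by
  have h := (AddSubgroup.zmultiples (a : ZMod n)).index_mul_card
  rw [Nat.card_zmultiples, ZMod.addOrderOf_coe a (NeZero.ne n), Nat.card_zmod] at h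
  have hpos : 0 < n / n.gcd a :=
    Nat.div_pos (Nat.gcd_le_left a (NeZero.pos n)) (Nat.gcd_pos_of_pos_left a (NeZero.pos n))
  exact Nat.eq_of_mul_eq_mul_right hpos (h.trans (Nat.mul_div_cancel' (Nat.gcd_dvd_left n a)).symm)

theorem hamming_upper_bound_odd_cycles_general (x y : List (Fin 2)) (m n : ℕ)
    (hx : x.length = m) (hy : y.length = n)
    (hodd : Odd ((m + n) / Nat.gcd m n)) :
    hdist (x ++ y) (y ++ x) ≤ m + n - Nat.gcd m n := by
  have : NeZero (m + n) := ⟨fun h => by simp [h] at hodd⟩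
  have hgcd : (m + n).gcd m = m.gcd n := by
    rw [add_comm, Nat.gcd_add_self_left, Nat.gcd_comm]
  have hord : addOrderOf (m : ZMod (m + n)) = (m + n) / m.gcd n := by
    rw [ZMod.addOrderOf_coe m (NeZero.ne _), hgcd]
  obtain ⟨f, hf⟩ := exists_hdist_rotate_eq_hammingDist (x ++ y) (N := m + n) (by simp [hx, hy]) m
  have hrotate : (x ++ y).rotate m = y ++ x := hx ▸ List.rotate_append_length_eq x y
  rw [hrotate] at hf
  have hbound := hammingDist_add_right_add_index_le f (hord ▸ hodd)
  rw [ZMod.index_zmultiples_natCast, hgcd, ZMod.card] at hbound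
  omega

theorem hamming_upper_bound_odd_cycles (x y : List (Fin 2)) (m n : ℕ)
    (hx : x.length = m) (hy : y.length = n) (hm : 1 ≤ m) (hn : 1 ≤ n)
    (hodd : Odd ((m + n) / Nat.gcd m n)) :
    hdist (x ++ y) (y ++ x) ≤ m + n - Nat.gcd m n :=
  hamming_upper_bound_odd_cycles_general x y m n hx hy hodd
end

section
/- Let m, n, k be integers with 1 ≤ m ≤ n, 0 ≤ k ≤ m+n, k even, and additionally k ≤ m+n−gcd(m,n) whenever (m+n)/gcd(m,n) is odd. Then there exist binary strings x, y with |x| = m, |y| = n, and h(xy,yx) = k. -/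
open Finset Function

lemma hdist_map_range {α : Type*} [DecidableEq α] (f g : ℕ → α) (N : ℕ) :
    hdist ((List.range N).map f) ((List.range N).map g) = #{i ∈ range N | f i ≠ g i} := by
  rw [hdist, List.zip_map', List.filter_map, List.length_map]
  rfl

lemma map_range_rotate_of_periodic {α : Type*} {w : ℕ → α} {N : ℕ} (hw : Periodic w N)
    (m : ℕ) :
    ((List.range N).map w).rotate m = (List.range N).map (fun i => w (i + m)) := by
  refine List.ext_getElem (by simp) fun i h₁ h₂ => ?_
  simp [List.getElem_rotate, hw.map_mod_nat]

lemma sum_range_mul_div_mod {M : Type*} [AddCommMonoid M] (f : ℕ → ℕ → M) (d t : ℕ) :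
    ∑ i ∈ range (d * t), f (i % d) (i / d) = ∑ r ∈ range d, ∑ q ∈ range t, f r q := by
  rw [← sum_product']
  refine sum_nbij' (fun i => (i % d, i / d)) (fun p => p.1 + d * p.2) ?_ ?_ ?_ ?_ (fun _ _ => rfl)
  · intro i hi
    simp only [mem_range, mem_product] at hi ⊢
    have hd : 0 < d := Nat.pos_of_ne_zero (by rintro rfl; simp at hi)
    exact ⟨Nat.mod_lt _ hd, Nat.div_lt_of_lt_mul hi⟩
  · rintro ⟨r, q⟩ h
    simp only [mem_range, mem_product] at h ⊢
    nlinarith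
  · intro i _
    exact Nat.mod_add_div i d
  · rintro ⟨r, q⟩ h
    simp only [mem_range, mem_product] at h
    simp [Nat.add_mul_div_left, Nat.mod_eq_of_lt h.1, Nat.div_eq_of_lt h.1, (by omega : 0 < d)]

lemma Function.Periodic.sum_range_comp_mul {M : Type*} [AddCommMonoid M] {F : ℕ → M} {t : ℕ}
    (hF : Periodic F t) {a b : ℕ} (hba : b * a ≡ 1 [MOD t]) :
    ∑ q ∈ range t, F (q * a) = ∑ q ∈ range t, F q := by
  rcases Nat.eq_zero_or_pos t with rfl | ht
  · simp
  have inv {x y q : ℕ} (hxy : x * y ≡ 1 [MOD t]) (hq : q < t) : q * x % t * y % t = q := by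
    rw [Nat.mod_mul_mod, mul_assoc, Nat.mul_mod, hxy, ← Nat.mul_mod, mul_one,
      Nat.mod_eq_of_lt hq]
  refine sum_nbij' (fun q => q * a % t) (fun q => q * b % t) ?_ ?_ ?_ ?_ ?_
  · intro q _; simpa using Nat.mod_lt _ ht
  · intro q _; simpa using Nat.mod_lt _ ht
  · intro q hq; exact inv (by rwa [mul_comm]) (mem_range.1 hq)
  · intro q hq; exact inv hba (mem_range.1 hq)
  · intro q _; exact (hF.map_mod_nat _).symm

def alternatingPrefix (c t s : ℕ) : Fin 2 := if s % t < 2 * c ∧ s % t % 2 = 1 then 1 else 0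

lemma alternatingPrefix_periodic (c t : ℕ) : Periodic (alternatingPrefix c t) t := by
  intro s; simp [alternatingPrefix]

lemma alternatingPrefix_ne_succ_iff {c t s : ℕ} (hct : 2 * c ≤ t) (hs : s < t) :
    alternatingPrefix c t s ≠ alternatingPrefix c t (s + 1) ↔ s < 2 * c := by
  unfold alternatingPrefix
  rw [Nat.mod_eq_of_lt hs]
  rcases (Nat.succ_le_of_lt hs).lt_or_eq with hlt | hlast
  · rw [Nat.mod_eq_of_lt hlt]
    grind
  · rw [← hlast, Nat.mod_self]
    grind

lemma card_alternatingPrefix_ne_succ {c t : ℕ} (hct : 2 * c ≤ t) :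
    #{s ∈ range t | alternatingPrefix c t s ≠ alternatingPrefix c t (s + 1)} = 2 * c := by
  rw [filter_congr fun s hs => alternatingPrefix_ne_succ_iff hct (mem_range.1 hs),
    show {s ∈ range t | s < 2 * c} = range (2 * c) by
      ext; simp only [mem_filter, mem_range]; omega,
    card_range]

lemma exists_sum_range_eq_of_le_mul {K d T : ℕ} (h : K ≤ d * T) :
    ∃ c : ℕ → ℕ, (∀ r, c r ≤ T) ∧ ∑ r ∈ range d, c r = K := by
  refine ⟨fun r => min T (K - r * T), fun r => min_le_left _ _, ?_⟩
  suffices ∀ e, ∑ r ∈ range e, min T (K - r * T) = min K (e * T) by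
    rw [this, min_eq_left h]
  intro e
  induction e with
  | zero => simp
  | succ e ih => rw [sum_range_succ, ih, Nat.succ_mul]; omega

/-- The positions `i ≡ r [MOD d]` form the `r`-th cycle of `i ↦ i + d * m₁` modulo `d * t`;
along it `i / d` advances by `m₁`, so when `m₁ * a ≡ 1 [MOD t]` the index `i / d * a` advances
by one. -/
def cycleWord {α : Type*} (d a : ℕ) (P : ℕ → ℕ → α) (i : ℕ) : α :=
  P (i % d) (i / d * a)

section cycleWord

variable {α : Type*} {P : ℕ → ℕ → α} {d t : ℕ}

lemma cycleWord_periodic (a : ℕ) (hP : ∀ r, Periodic (P r) t) :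
    Periodic (cycleWord d a P) (d * t) := by
  intro i
  rcases Nat.eq_zero_or_pos d with rfl | hd
  · simp
  simp only [cycleWord, Nat.add_mul_mod_self_left, Nat.add_mul_div_left _ _ hd, add_mul,
    mul_comm t a]
  exact (hP _).nat_mul a _

lemma cycleWord_add_mul {m₁ a : ℕ} (hP : ∀ r, Periodic (P r) t) (ha : m₁ * a ≡ 1 [MOD t])
    (hd : 0 < d) (i : ℕ) :
    cycleWord d a P (i + d * m₁) = P (i % d) (i / d * a + 1) := by
  simp only [cycleWord, Nat.add_mul_mod_self_left, Nat.add_mul_div_left _ _ hd, add_mul]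
  rw [← (hP _).map_mod_nat, Nat.add_mod, show m₁ * a % t = 1 % t from ha, ← Nat.add_mod,
    (hP _).map_mod_nat]

lemma card_cycleWord_ne_add_mul [DecidableEq α] {m₁ a : ℕ} (hP : ∀ r, Periodic (P r) t)
    (ha : m₁ * a ≡ 1 [MOD t]) :
    #{i ∈ range (d * t) | cycleWord d a P i ≠ cycleWord d a P (i + d * m₁)} =
      ∑ r ∈ range d, #{s ∈ range t | P r s ≠ P r (s + 1)} := by
  rcases Nat.eq_zero_or_pos d with rfl | hd
  · simp
  set F : ℕ → ℕ → ℕ := fun r s => if P r s ≠ P r (s + 1) then 1 else 0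
  have hF : ∀ r, Periodic (F r) t := fun r s => by simp only [F, add_right_comm s t, hP r _]
  calc #{i ∈ range (d * t) | cycleWord d a P i ≠ cycleWord d a P (i + d * m₁)}
      = ∑ i ∈ range (d * t), F (i % d) (i / d * a) := by
        simp only [card_filter, cycleWord_add_mul hP ha hd]; rfl
    _ = ∑ r ∈ range d, ∑ q ∈ range t, F r (q * a) :=
        sum_range_mul_div_mod (fun r q => F r (q * a)) d t
    _ = ∑ r ∈ range d, ∑ s ∈ range t, F r s :=
        sum_congr rfl fun r _ => (hF r).sum_range_comp_mul ha
    _ = ∑ r ∈ range d, #{s ∈ range t | P r s ≠ P r (s + 1)} := by simp only [card_filter, F]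

end cycleWord

lemma exists_periodic_card_ne_add_eq {d t m₁ a K : ℕ} (ha : m₁ * a ≡ 1 [MOD t])
    (hK : K ≤ d * (t / 2)) :
    ∃ w : ℕ → Fin 2,
      Periodic w (d * t) ∧ #{i ∈ range (d * t) | w i ≠ w (i + d * m₁)} = 2 * K := by
  obtain ⟨c, hct, hcK⟩ := exists_sum_range_eq_of_le_mul hK
  have hP : ∀ r, Periodic (alternatingPrefix (c r) t) t := fun r => alternatingPrefix_periodic _ _
  refine ⟨cycleWord d a fun r => alternatingPrefix (c r) t, cycleWord_periodic a hP, ?_⟩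
  rw [card_cycleWord_ne_add_mul hP ha, ← hcK, mul_sum]
  exact sum_congr rfl fun r _ => card_alternatingPrefix_ne_succ (by have := hct r; omega)

lemma div_two_le_mul_div_two {k d t : ℕ} (hk : k ≤ d * t)
    (hodd : Odd t → k ≤ d * t - d) : k / 2 ≤ d * (t / 2) := by
  obtain ⟨T, rfl | rfl⟩ := Nat.even_or_odd' t
  · rw [Nat.mul_div_cancel_left _ two_pos]
    rw [mul_left_comm] at hk
    omega
  · have := hodd (odd_two_mul_add_one T)
    rw [show (2 * T + 1) / 2 = T by omega]
    rw [mul_add, mul_one, mul_left_comm, Nat.add_sub_cancel] at this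
    omega

theorem binary_realizable_general (m n k : ℕ) (hm : 1 ≤ m)
    (hk : k ≤ m + n) (hke : Even k)
    (hkc : Odd ((m + n) / Nat.gcd m n) → k ≤ m + n - Nat.gcd m n) :
    ∃ x y : List (Fin 2), x.length = m ∧ y.length = n ∧
      hdist (x ++ y) (y ++ x) = k := by
  obtain ⟨m₁, n₁, hcop, hm₁, hn₁⟩ := Nat.exists_coprime m n
  set d := Nat.gcd m n
  have hd : 0 < d := Nat.gcd_pos_of_pos_left n hm
  have hN : m + n = d * (m₁ + n₁) := by rw [hm₁, hn₁]; ring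
  have ht : (m + n) / d = m₁ + n₁ := by rw [hN, Nat.mul_div_cancel_left _ hd]
  obtain ⟨a, -, ha⟩ := Nat.exists_mul_mod_eq_of_coprime 1
    (Nat.coprime_add_self_right.2 hcop : Nat.Coprime m₁ (n₁ + m₁))
    (by rintro h; simp [Nat.add_eq_zero_iff.1 h] at hm₁; omega)
  obtain ⟨w, hw, hcount⟩ := exists_periodic_card_ne_add_eq (d := d) (K := k / 2)
    (by rwa [add_comm] at ha) (div_two_le_mul_div_two (hN ▸ hk) (hN ▸ ht ▸ hkc))
  rw [← hN, mul_comm, ← hm₁, Nat.two_mul_div_two_of_even hke] at hcount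
  rw [← hN] at hw
  set l := (List.range (m + n)).map w
  refine ⟨l.take m, l.drop m, by simp [l], by simp [l], ?_⟩
  rw [List.take_append_drop, ← List.rotate_eq_drop_append_take (by simp [l]),
    map_range_rotate_of_periodic hw, hdist_map_range, hcount]

theorem binary_realizable (m n k : ℕ) (hm : 1 ≤ m) (hmn : m ≤ n)
    (hk : k ≤ m + n) (hke : Even k)
    (hkc : Odd ((m + n) / Nat.gcd m n) → k ≤ m + n - Nat.gcd m n) :
    ∃ x y : List (Fin 2), x.length = m ∧ y.length = n ∧
      hdist (x ++ y) (y ++ x) = k :=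
  binary_realizable_general m n k hm hk hke hkc
end

section
/- Let m, n ≥ 1 and k ≥ 0. There exist binary strings x, y with |x| = m, |y| = n, h(xy,yx) = k if and only if: (a) k ≤ m+n, (b) k is even, and (c) k ≤ m+n−gcd(m,n) whenever (m+n)/gcd(m,n) is odd. -/
open Finset Fin.NatCast

section Hamming

variable {α β γ : Type*} [Fintype α] [DecidableEq γ]

theorem hammingDist_comp_equiv [Fintype β] (e : α ≃ β) (f g : β → γ) :
    hammingDist (f ∘ e) (g ∘ e) = hammingDist f g := by
  simp only [hammingDist]
  exact card_equiv e (by simp)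

theorem hammingDist_prod_eq_sum [Fintype β] (f g : α × β → γ) :
    hammingDist f g = ∑ a, hammingDist (fun b => f (a, b)) (fun b => g (a, b)) := by
  simp only [hammingDist, card_filter, Fintype.sum_prod_type]

theorem even_hammingDist_comp_perm (σ : Equiv.Perm α) (f : α → Fin 2) :
    Even (hammingDist f (f ∘ σ)) := by
  -- Modulo 2, `[a ≠ b] = a + b`, and `∑ f (σ a) = ∑ f a`.
  have indicator : ∀ a b : Fin 2,
      ((if a ≠ b then 1 else 0 : ℕ) : ZMod 2) = (a : ℕ) + (b : ℕ) := by
    decide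
  rw [← ZMod.natCast_eq_zero_iff_even, hammingDist, card_filter, Nat.cast_sum]
  simp only [Function.comp_apply, indicator, sum_add_distrib]
  rw [Equiv.sum_comp σ (fun a => ((f a : ℕ) : ZMod 2)), CharTwo.add_self_eq_zero]

theorem hammingDist_comp_perm_le_two_mul_card_div_two (σ : Equiv.Perm α) (f : α → Fin 2) :
    hammingDist f (f ∘ σ) ≤ 2 * (Fintype.card α / 2) := by
  obtain ⟨t, ht⟩ := even_hammingDist_comp_perm σ f
  have := hammingDist_le_card_fintype (x := f) (y := f ∘ σ)
  omega

end Hamming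

theorem exists_hammingDist_add_one_eq {L c : ℕ} [NeZero L] (hc : Even c) (hcL : c ≤ L) :
    ∃ f : Fin L → Fin 2, hammingDist f (fun j => f (j + 1)) = c := by
  obtain ⟨L, rfl⟩ := Nat.exists_eq_succ_of_ne_zero (NeZero.ne L)
  -- `0101…01` on `[0, c)` and `0` after it changes exactly at the positions `j < c`.
  refine ⟨fun j => if Odd (j : ℕ) ∧ (j : ℕ) < c then 1 else 0, ?_⟩
  have changes : ∀ j : Fin (L + 1),
      ((if Odd (j : ℕ) ∧ (j : ℕ) < c then 1 else 0 : Fin 2) ≠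
        if Odd ((j + 1 : Fin (L + 1)) : ℕ) ∧ ((j + 1 : Fin (L + 1)) : ℕ) < c then 1 else 0) ↔
        (j : ℕ) < c := by
    intro j
    have := j.isLt
    rw [Nat.even_iff] at hc
    rw [Fin.val_add_one]
    split_ifs <;> simp_all [Fin.ext_iff, Nat.odd_iff] <;> omega
  simp only [hammingDist, changes, Fin.card_filter_val_lt]
  omega

theorem exists_sum_eq_of_le_mul {d M k : ℕ} (hk : k ≤ d * M) :
    ∃ c : Fin d → ℕ, (∀ i, c i ≤ M) ∧ ∑ i, c i = k := by
  induction d generalizing k with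
  | zero => exact ⟨Fin.elim0, (·.elim0), by simp_all⟩
  | succ d ih =>
    obtain ⟨c, hcM, hc⟩ := ih (k := k - min M k) (by rw [Nat.succ_mul] at hk; omega)
    refine ⟨Fin.cons (min M k) c, Fin.cases (min_le_left _ _) hcM, ?_⟩
    rw [Fin.sum_univ_succ]
    simp only [Fin.cons_zero, Fin.cons_succ, hc]
    omega

theorem exists_hammingDist_cycles_eq_iff {d L k : ℕ} [NeZero L] :
    (∃ g : Fin d × Fin L → Fin 2, hammingDist g (fun p => g (p.1, p.2 + 1)) = k) ↔
      Even k ∧ k ≤ d * (2 * (L / 2)) := by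
  constructor
  · rintro ⟨g, rfl⟩
    refine ⟨even_hammingDist_comp_perm ((Equiv.refl _).prodCongr (Equiv.addRight 1)) g, ?_⟩
    rw [hammingDist_prod_eq_sum]
    calc ∑ r, hammingDist (fun j => g (r, j)) (fun j => g (r, j + 1))
        ≤ ∑ _r : Fin d, 2 * (L / 2) := by
          gcongr with r
          have := hammingDist_comp_perm_le_two_mul_card_div_two (Equiv.addRight (1 : Fin L))
            (fun j => g (r, j))
          rwa [Fintype.card_fin] at this
      _ = d * (2 * (L / 2)) := by simp
  · rintro ⟨⟨t, rfl⟩, hk⟩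
    obtain ⟨c, hcL, hct⟩ := exists_sum_eq_of_le_mul (d := d) (M := L / 2) (k := t)
      (by rw [mul_left_comm] at hk; omega)
    choose f hf using fun r => exists_hammingDist_add_one_eq (L := L) (even_two_mul (c r))
      (by have := hcL r; omega)
    refine ⟨fun p => f p.1 p.2, ?_⟩
    simp only [hammingDist_prod_eq_sum, hf, ← mul_sum, hct]
    ring

theorem Fin.natCast_eq_natCast_iff_modEq {N : ℕ} [NeZero N] {a b : ℕ} :
    (a : Fin N) = b ↔ a ≡ b [MOD N] := by
  simp [Fin.ext_iff, Fin.val_natCast, Nat.ModEq]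

instance neZero_div_gcd {m N : ℕ} [NeZero N] : NeZero (N / Nat.gcd m N) :=
  ⟨(Nat.div_pos (Nat.gcd_le_right _ (NeZero.pos N))
    (Nat.gcd_pos_of_pos_right _ (NeZero.pos N))).ne'⟩

theorem dvd_div_gcd_mul (m N : ℕ) : N ∣ N / Nat.gcd m N * m :=
  ⟨m / Nat.gcd m N, by
    rw [Nat.div_mul_right_comm (Nat.gcd_dvd_right m N),
      Nat.mul_div_assoc _ (Nat.gcd_dvd_left m N)]⟩

section CycleDecomposition

variable {N : ℕ} [NeZero N] (m : ℕ)

/-- Cycle `r` of the translation by `m` on `ℤ/N` is traversed as `r, r + m, r + 2m, …`. -/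
def cycleCoord (p : Fin (Nat.gcd m N) × Fin (N / Nat.gcd m N)) : Fin N :=
  ((p.1 + p.2 * m : ℕ) : Fin N)

theorem cycleCoord_add_one (r : Fin (Nat.gcd m N)) (j : Fin (N / Nat.gcd m N)) :
    cycleCoord m (r, j + 1) = cycleCoord m (r, j) + m := by
  rw [cycleCoord, cycleCoord, ← Nat.cast_add, Fin.natCast_eq_natCast_iff_modEq]
  have hj : ((j + 1 : Fin (N / Nat.gcd m N)) : ℕ) ≡ j + 1 [MOD N / Nat.gcd m N] := by
    rw [Fin.val_add, Fin.val_one']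
    exact (Nat.mod_modEq _ _).trans (Nat.ModEq.add_left _ (Nat.mod_modEq _ _))
  calc (r + (j + 1 : Fin _) * m : ℕ) ≡ r + (j + 1) * m [MOD N] :=
        ((hj.mul_right' m).of_dvd (dvd_div_gcd_mul m N)).add_left r
    _ = r + j * m + m := by ring

theorem cycleCoord_injective : Function.Injective (cycleCoord (N := N) m) := by
  rintro ⟨r₁, j₁⟩ ⟨r₂, j₂⟩ h
  rw [cycleCoord, cycleCoord, Fin.natCast_eq_natCast_iff_modEq] at h
  have add_mul_modEq (a j : ℕ) : a + j * m ≡ a [MOD Nat.gcd m N] := by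
    simpa using (Nat.modEq_zero_iff_dvd.2 ((Nat.gcd_dvd_left m N).mul_left j)).add_left a
  have hr : (r₁ : ℕ) = r₂ :=
    (((add_mul_modEq _ _).symm.trans (h.of_dvd (Nat.gcd_dvd_right m N))).trans
      (add_mul_modEq _ _)).eq_of_lt_of_lt r₁.isLt r₂.isLt
  have hj : (j₁ : ℕ) ≡ j₂ [MOD N / Nat.gcd m N] := by
    simpa [Nat.gcd_comm] using
      (Nat.ModEq.add_left_cancel' _ (hr ▸ h)).cancel_right_div_gcd (NeZero.pos N)
  simp [Fin.ext_iff, hr, hj.eq_of_lt_of_lt j₁.isLt j₂.isLt]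

noncomputable def cycleEquiv : Fin (Nat.gcd m N) × Fin (N / Nat.gcd m N) ≃ Fin N :=
  Equiv.ofBijective (cycleCoord m) <| (Fintype.bijective_iff_injective_and_card _).2
    ⟨cycleCoord_injective m, by simp [Nat.mul_div_cancel' (Nat.gcd_dvd_right m N)]⟩

theorem hammingDist_add_eq_cycles {γ : Type*} [DecidableEq γ] (f : Fin N → γ) :
    hammingDist f (fun i => f (i + m)) =
      hammingDist (f ∘ cycleEquiv m) (fun p => (f ∘ cycleEquiv m) (p.1, p.2 + 1)) := by
  rw [← hammingDist_comp_equiv (cycleEquiv m)]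
  congr 1
  funext p
  simp [cycleEquiv, cycleCoord_add_one]

theorem exists_hammingDist_add_eq_iff {k : ℕ} :
    (∃ f : Fin N → Fin 2, hammingDist f (fun i => f (i + m)) = k) ↔
      Even k ∧ k ≤ Nat.gcd m N * (2 * (N / Nat.gcd m N / 2)) := by
  rw [← exists_hammingDist_cycles_eq_iff]
  constructor
  · rintro ⟨f, rfl⟩
    exact ⟨_, (hammingDist_add_eq_cycles m f).symm⟩
  · rintro ⟨g, rfl⟩
    refine ⟨g ∘ (cycleEquiv m).symm, ?_⟩
    rw [hammingDist_add_eq_cycles]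
    simp [Function.comp_def]

end CycleDecomposition

section Lists

variable {α : Type*} [DecidableEq α]

theorem hdist_ofFn {N : ℕ} (f g : Fin N → α) :
    hdist (List.ofFn f) (List.ofFn g) = hammingDist f g := by
  rw [hammingDist, card_def, filter_val, val_univ_fin]
  simp [hdist, List.ofFn_eq_map, List.zip_map', List.filter_map, Function.comp_def]

omit [DecidableEq α] in
theorem rotate_ofFn {N : ℕ} [NeZero N] (f : Fin N → α) (m : ℕ) :
    (List.ofFn f).rotate m = List.ofFn (fun i : Fin N => f (i + m)) := by
  refine List.ext_getElem (by simp) fun i h₁ h₂ => ?_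
  simp only [List.getElem_rotate, List.getElem_ofFn, List.length_ofFn]
  congr 1
  ext
  simp [Fin.val_add, Fin.val_natCast]

theorem hdist_append_comm (x y : List α) :
    hdist (x ++ y) (y ++ x) = hdist (x ++ y) ((x ++ y).rotate x.length) := by
  rw [List.rotate_append_length_eq]

theorem exists_hdist_append_comm_iff {m n k : ℕ} [NeZero (m + n)] :
    (∃ x y : List α, x.length = m ∧ y.length = n ∧ hdist (x ++ y) (y ++ x) = k) ↔
      ∃ f : Fin (m + n) → α, hammingDist f (fun i => f (i + m)) = k := by
  constructor
  · rintro ⟨x, y, rfl, hy, rfl⟩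
    obtain ⟨f, hf⟩ : ∃ f : Fin (x.length + n) → α, x ++ y = List.ofFn f := by
      rw [← hy, ← List.length_append]
      exact ⟨_, List.ofFn_getElem.symm⟩
    exact ⟨f, by rw [hdist_append_comm, hf, rotate_ofFn, hdist_ofFn]⟩
  · rintro ⟨f, rfl⟩
    have hx : ((List.ofFn f).take m).length = m := by simp
    refine ⟨_, (List.ofFn f).drop m, hx, by simp, ?_⟩
    rw [hdist_append_comm, List.take_append_drop, hx, rotate_ofFn, hdist_ofFn]

end Lists

theorem le_mul_two_mul_div_two_iff {d L k : ℕ} :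
    k ≤ d * (2 * (L / 2)) ↔ k ≤ d * L ∧ (Odd L → k ≤ d * L - d) := by
  rcases Nat.even_or_odd' L with ⟨t, rfl | rfl⟩
  · simp
  · simp only [show (2 * t + 1) / 2 = t by omega, odd_two_mul_add_one, forall_const,
      Nat.mul_add, mul_one]
    omega

theorem binary_realizable_iff_general (m n k : ℕ) (hm : 1 ≤ m) :
    (∃ x y : List (Fin 2), x.length = m ∧ y.length = n ∧
        hdist (x ++ y) (y ++ x) = k) ↔
      (k ≤ m + n ∧ Even k ∧
        (Odd ((m + n) / Nat.gcd m n) → k ≤ m + n - Nat.gcd m n)) := by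
  have : NeZero (m + n) := ⟨by omega⟩
  have hgcd : Nat.gcd m (m + n) = Nat.gcd m n := by
    rw [Nat.add_comm, Nat.gcd_add_self_right]
  have hdL : Nat.gcd m n * ((m + n) / Nat.gcd m n) = m + n :=
    Nat.mul_div_cancel' (Nat.dvd_add (Nat.gcd_dvd_left m n) (Nat.gcd_dvd_right m n))
  rw [exists_hdist_append_comm_iff, exists_hammingDist_add_eq_iff, hgcd,
    le_mul_two_mul_div_two_iff, hdL]
  tauto

theorem binary_realizable_iff (m n k : ℕ) (hm : 1 ≤ m) (hn : 1 ≤ n) :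
    (∃ x y : List (Fin 2), x.length = m ∧ y.length = n ∧
        hdist (x ++ y) (y ++ x) = k) ↔
      (k ≤ m + n ∧ Even k ∧
        (Odd ((m + n) / Nat.gcd m n) → k ≤ m + n - Nat.gcd m n)) :=
  binary_realizable_iff_general m n k hm
end
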